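/- arXiv:2303.00078 — 3 statements merged into one kernel-verified Lean document; each statement's English description precedes it below -/
import Mathlib

section
/- The United States coin system (1,5,10,25) is orderly: for every positive integer v, the greedy algorithm produces a representation of v with the minimum number of coins. -/
def coinMax (C : List ℕ) (v : ℕ) : ℕ := (C.filter (· ≤ v)).foldr max 0

def grdAux (C : List ℕ) : ℕ → ℕ → ℕ
  | 0, _ => 0
  | fuel + 1, v =>
    let c := coinMax C v
    if v = 0 ∨ c = 0 then 0 else 1 + grdAux C fuel (v - c)

def grd (C : List ℕ) (v : ℕ) : ℕ := grdAux C v v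

def reprCosts (C : List ℕ) (v : ℕ) : Set ℕ :=
  {k | ∃ x : List ℕ, x.length = C.length ∧ (List.zipWith (· * ·) x C).sum = v ∧ x.sum = k}

noncomputable def opt (C : List ℕ) (v : ℕ) : ℕ := sInf (reprCosts C v)

def Orderly (C : List ℕ) : Prop := ∀ v : ℕ, 0 < v → grd C v = opt C v

def f (v : ℕ) : ℕ := v / 25 + v % 25 / 10 + v % 25 % 10 / 5 + v % 5

lemma coinMax_eq (v : ℕ) : coinMax [1,5,10,25] v =
    if 25 ≤ v then 25 else if 10 ≤ v then 10 else if 5 ≤ v then 5 else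
    if 1 ≤ v then 1 else 0 := by
  unfold coinMax
  by_cases h1 : 25 ≤ v
  · have h2 : 10 ≤ v := by omega
    have h3 : 5 ≤ v := by omega
    have h4 : 1 ≤ v := by omega
    simp [h1, h2, h3, h4]
  · by_cases h2 : 10 ≤ v
    · have h3 : 5 ≤ v := by omega
      have h4 : 1 ≤ v := by omega
      simp [h1, h2, h3, h4]
    · by_cases h3 : 5 ≤ v
      · have h4 : 1 ≤ v := by omega
        simp [h1, h2, h3, h4]
      · by_cases h4 : 1 ≤ v
        · simp [h1, h2, h3, h4]
        · simp [h1, h2, h3, h4]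

lemma grdAux_eq : ∀ fuel v, v ≤ fuel → grdAux [1,5,10,25] fuel v = f v := by
  intro fuel
  induction fuel with
  | zero => intro v hv; interval_cases v; rfl
  | succ n ih =>
    intro v hv
    by_cases h0 : v = 0
    · subst h0; rfl
    rw [grdAux, coinMax_eq]
    by_cases h1 : 25 ≤ v
    · rw [if_pos h1]
      simp only [if_neg (show ¬(v = 0 ∨ (25:ℕ) = 0) by omega)]
      rw [ih (v - 25) (by omega)]
      unfold f; omega
    rw [if_neg h1]
    by_cases h2 : 10 ≤ v
    · rw [if_pos h2]
      simp only [if_neg (show ¬(v = 0 ∨ (10:ℕ) = 0) by omega)]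
      rw [ih (v - 10) (by omega)]
      unfold f; omega
    rw [if_neg h2]
    by_cases h3 : 5 ≤ v
    · rw [if_pos h3]
      simp only [if_neg (show ¬(v = 0 ∨ (5:ℕ) = 0) by omega)]
      rw [ih (v - 5) (by omega)]
      unfold f; omega
    rw [if_neg h3]
    rw [if_pos (show 1 ≤ v by omega)]
    simp only [if_neg (show ¬(v = 0 ∨ (1:ℕ) = 0) by omega)]
    rw [ih (v - 1) (by omega)]
    unfold f; omega

lemma f_mem (v : ℕ) : f v ∈ reprCosts [1,5,10,25] v := by
  refine ⟨[v % 5, v % 25 % 10 / 5, v % 25 / 10, v / 25], by simp, ?_, ?_⟩ <;>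
    simp [f, List.sum_cons] <;> omega

lemma f_le (v k : ℕ) (hk : k ∈ reprCosts [1,5,10,25] v) : f v ≤ k := by
  obtain ⟨x, hlen, hsum, hk⟩ := hk
  match x, hlen with
  | [a,b,c,d], _ =>
    simp [List.zipWith, List.sum_cons] at hsum hk
    unfold f; omega

theorem stmt_2 : Orderly [1, 5, 10, 25] := by
  intro v hv
  have h1 : grd [1,5,10,25] v = f v := grdAux_eq v v le_rfl
  have h2 : opt [1,5,10,25] v = f v := by
    apply le_antisymm
    · exact Nat.sInf_le (f_mem v)
    · have := Nat.sInf_mem (s := reprCosts [1,5,10,25] v) ⟨f v, f_mem v⟩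
      exact f_le v _ this
  rw [h1, h2]
end

section
/- The coin system (1, 2, 5, 10, 20, 50, 100, 200) is orderly. -/
/-!
Greedy is optimal as soon as it satisfies the exchange inequality `grd C v ≤ grd C (v - c) + 1`
for every coin `c ≤ v`: removing the coins of an arbitrary representation one at a time then
shows, by induction on its size, that greedy uses no more coins. If `M` is the largest coin and
`v ≥ 2 * M`, greedy starts with `M` both on `v` and on `v - c`, so the inequality at `v` follows
from the one at `v - M`. For `(1, 2, 5, 10, 20, 50, 100, 200)` it therefore suffices to check it
for `v < 400`, which is a finite computation.
-/

section CoinSystem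

variable {C : List ℕ}

theorem coinMax_le (C : List ℕ) (v : ℕ) : coinMax C v ≤ v :=
  List.max_le_of_forall_le _ _ fun _ hc => of_decide_eq_true (List.mem_filter.mp hc).2

theorem le_coinMax {c v : ℕ} (hc : c ∈ C) (hcv : c ≤ v) : c ≤ coinMax C v :=
  List.le_max_of_le (List.mem_filter.mpr ⟨hc, decide_eq_true hcv⟩) le_rfl

theorem coinMax_le_of_forall_le {M : ℕ} (hM : ∀ c ∈ C, c ≤ M) (v : ℕ) : coinMax C v ≤ M :=
  List.max_le_of_forall_le _ _ fun c hc => hM c (List.mem_filter.mp hc).1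

theorem coinMax_mem {v : ℕ} (h : coinMax C v ≠ 0) : coinMax C v ∈ C := by
  have hne : C.filter (· ≤ v) ≠ [] := by
    rintro hnil
    simp [coinMax, hnil] at h
  have hmax := List.foldr_max_of_ne_nil hne
  exact (List.mem_filter.mp (List.maximum_mem hmax.symm)).1

theorem grdAux_zero_right (C : List ℕ) (f : ℕ) : grdAux C f 0 = 0 := by
  cases f <;> simp [grdAux]

theorem grdAux_congr_fuel {f f' v : ℕ} (hf : v ≤ f) (hf' : v ≤ f') :
    grdAux C f v = grdAux C f' v := by
  induction f generalizing f' v with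
  | zero => rw [Nat.le_zero.mp hf, grdAux_zero_right, grdAux_zero_right]
  | succ f ih =>
    obtain rfl | hv := Nat.eq_zero_or_pos v
    · rw [grdAux_zero_right, grdAux_zero_right]
    obtain ⟨f', rfl⟩ := Nat.exists_eq_add_one_of_ne_zero (by omega : f' ≠ 0)
    simp only [grdAux]
    split_ifs with h
    · rfl
    · rw [ih (f' := f') (by omega) (by omega)]

theorem grdAux_eq_grd {f v : ℕ} (h : v ≤ f) : grdAux C f v = grd C v :=
  grdAux_congr_fuel h le_rfl

theorem grd_zero (C : List ℕ) : grd C 0 = 0 := rfl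

theorem grd_eq_grd_sub_coinMax_add_one {v : ℕ} (hv : 0 < v) (hc : coinMax C v ≠ 0) :
    grd C v = grd C (v - coinMax C v) + 1 := by
  obtain ⟨u, rfl⟩ := Nat.exists_eq_add_one_of_ne_zero hv.ne'
  have hle := coinMax_le C (u + 1)
  rw [grd, grdAux, if_neg (by omega), grdAux_eq_grd (by omega), add_comm]

theorem mem_reprCosts_nil {v k : ℕ} : k ∈ reprCosts [] v ↔ v = 0 ∧ k = 0 := by
  simp [reprCosts, eq_comm]

theorem mem_reprCosts_cons {c v k : ℕ} :
    k ∈ reprCosts (c :: C) v ↔ ∃ n w k', n * c + w = v ∧ k' ∈ reprCosts C w ∧ n + k' = k := by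
  constructor
  · rintro ⟨_ | ⟨n, x⟩, hlen, hv, hk⟩
    · simp at hlen
    · simp only [List.zipWith_cons_cons, List.sum_cons, List.length_cons,
        Nat.add_right_cancel_iff] at hlen hv hk
      exact ⟨n, _, _, hv, ⟨x, hlen, rfl, rfl⟩, hk⟩
  · rintro ⟨n, w, k', rfl, ⟨x, hlen, rfl, rfl⟩, rfl⟩
    exact ⟨n :: x, by simp [hlen], by simp, by simp⟩

theorem zero_mem_reprCosts_zero (C : List ℕ) : 0 ∈ reprCosts C 0 := by
  induction C with
  | nil => exact mem_reprCosts_nil.mpr ⟨rfl, rfl⟩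
  | cons c C ih => exact mem_reprCosts_cons.mpr ⟨0, 0, 0, by simp, ih, rfl⟩

theorem eq_zero_of_zero_mem_reprCosts {v : ℕ} (h : 0 ∈ reprCosts C v) : v = 0 := by
  induction C generalizing v with
  | nil => exact (mem_reprCosts_nil.mp h).1
  | cons c C ih =>
    obtain ⟨n, w, k', rfl, hw, hk⟩ := mem_reprCosts_cons.mp h
    obtain ⟨rfl, rfl⟩ : n = 0 ∧ k' = 0 := by omega
    simp [ih hw]

theorem add_one_mem_reprCosts_add {c w k : ℕ} (hc : c ∈ C) (hk : k ∈ reprCosts C w) :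
    k + 1 ∈ reprCosts C (w + c) := by
  induction C generalizing w k with
  | nil => simp at hc
  | cons d C ih =>
    obtain ⟨n, u, k', rfl, hu, rfl⟩ := mem_reprCosts_cons.mp hk
    rcases List.mem_cons.mp hc with rfl | hc
    · exact mem_reprCosts_cons.mpr ⟨n + 1, u, k', by ring, hu, by ring⟩
    · exact mem_reprCosts_cons.mpr ⟨n, u + c, k' + 1, by ring, ih hc hu, by ring⟩

theorem exists_mem_reprCosts_sub {v k : ℕ} (hk : k + 1 ∈ reprCosts C v) :
    ∃ c ∈ C, c ≤ v ∧ k ∈ reprCosts C (v - c) := by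
  induction C generalizing v k with
  | nil => simp [mem_reprCosts_nil] at hk
  | cons d C ih =>
    obtain ⟨n, w, k', rfl, hw, hnk⟩ := mem_reprCosts_cons.mp hk
    rcases n with _ | n
    · obtain ⟨c, hc, hcw, hck⟩ := ih (k := k) (by rwa [← hnk, zero_add])
      exact ⟨c, List.mem_cons_of_mem d hc, by omega,
        mem_reprCosts_cons.mpr ⟨0, w - c, k, by omega, hck, zero_add k⟩⟩
    · refine ⟨d, List.mem_cons_self, by nlinarith,
        mem_reprCosts_cons.mpr ⟨n, w, k', ?_, hw, by omega⟩⟩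
      rw [add_one_mul, add_right_comm, Nat.add_sub_cancel]

theorem grd_mem_reprCosts (h1 : 1 ∈ C) (v : ℕ) : grd C v ∈ reprCosts C v := by
  induction v using Nat.strong_induction_on with
  | _ v ih =>
    obtain rfl | hv := Nat.eq_zero_or_pos v
    · exact zero_mem_reprCosts_zero C
    have hpos : coinMax C v ≠ 0 := Nat.one_le_iff_ne_zero.mp (le_coinMax h1 hv)
    have hle := coinMax_le C v
    rw [grd_eq_grd_sub_coinMax_add_one hv hpos]
    simpa [Nat.sub_add_cancel hle] using
      add_one_mem_reprCosts_add (coinMax_mem hpos) (ih (v - coinMax C v) (by omega))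

theorem grd_le_of_mem_reprCosts
    (hC : ∀ v, ∀ c ∈ C, c ≤ v → grd C v ≤ grd C (v - c) + 1) {v k : ℕ}
    (hk : k ∈ reprCosts C v) : grd C v ≤ k := by
  induction k generalizing v with
  | zero => rw [eq_zero_of_zero_mem_reprCosts hk, grd_zero]
  | succ k ih =>
    obtain ⟨c, hc, hcv, hk⟩ := exists_mem_reprCosts_sub hk
    exact (hC v c hc hcv).trans (Nat.add_le_add_right (ih hk) 1)

theorem orderly_of_grd_le_grd_sub_add_one (h1 : 1 ∈ C)
    (hC : ∀ v, ∀ c ∈ C, c ≤ v → grd C v ≤ grd C (v - c) + 1) : Orderly C := fun v _ =>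
  (IsLeast.csInf_eq ⟨grd_mem_reprCosts h1 v, fun _ hk => grd_le_of_mem_reprCosts hC hk⟩).symm

theorem grd_eq_grd_sub_add_one_of_max {M : ℕ} (hM : M ∈ C) (hle : ∀ c ∈ C, c ≤ M) (hpos : 0 < M)
    {v : ℕ} (hv : M ≤ v) : grd C v = grd C (v - M) + 1 := by
  have hmax : coinMax C v = M := (coinMax_le_of_forall_le hle v).antisymm (le_coinMax hM hv)
  rw [grd_eq_grd_sub_coinMax_add_one (by omega) (by omega), hmax]

theorem grd_le_grd_sub_add_one_of_lt_two_mul {M : ℕ} (hM : M ∈ C) (hle : ∀ c ∈ C, c ≤ M)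
    (hsmall : ∀ v < 2 * M, ∀ c ∈ C, c ≤ v → grd C v ≤ grd C (v - c) + 1) :
    ∀ v, ∀ c ∈ C, c ≤ v → grd C v ≤ grd C (v - c) + 1 := by
  intro v
  induction v using Nat.strong_induction_on with
  | _ v ih =>
    intro c hc hcv
    obtain rfl | hc0 := Nat.eq_zero_or_pos c
    · exact Nat.le_succ _
    rcases lt_or_ge v (2 * M) with hv | hv
    · exact hsmall v hv c hc hcv
    have hcM := hle c hc
    have hM0 : 0 < M := hc0.trans_le hcM
    have hprev := ih (v - M) (by omega) c hc (by omega)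
    rw [grd_eq_grd_sub_add_one_of_max hM hle hM0 (by omega : M ≤ v),
      grd_eq_grd_sub_add_one_of_max hM hle hM0 (by omega : M ≤ v - c)]
    rwa [Nat.sub_right_comm, Nat.add_le_add_iff_right]

end CoinSystem

theorem stmt_3 : Orderly [1, 2, 5, 10, 20, 50, 100, 200] :=
  orderly_of_grd_le_grd_sub_add_one (by simp) <|
    grd_le_grd_sub_add_one_of_lt_two_mul (M := 200) (by simp) (by simp) (by decide +kernel)
end

section
/- The coin system (1, c_2, c_3) with 1 < c_2 < c_3 is orderly if and only if there exists a positive integer m such that m·c_2 - m ≤ c_3 - c_2 ≤ m·c_2. -/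
namespace Stmt7Aux

/-- cost of greedy below `b` -/
def g (a s : ℕ) : ℕ := s / a + s % a

/-- closed form for the greedy count with coins `1 < a < b`. -/
def F (a b v : ℕ) : ℕ := v / b + g a (v % b)

lemma coinMax_hi (a b v : ℕ) (h : 1 < a) (hab : a < b) (hv : b ≤ v) :
    coinMax [1,a,b] v = b := by
  simp [coinMax, List.filter, show 1 ≤ v by omega, show a ≤ v by omega, hv]
  omega

lemma coinMax_mid (a b v : ℕ) (h : 1 < a) (hv : a ≤ v) (hv2 : v < b) :
    coinMax [1,a,b] v = a := by
  simp [coinMax, List.filter, show 1 ≤ v by omega, hv, show ¬ (b ≤ v) by omega]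
  omega

lemma coinMax_lo (a b v : ℕ) (hv : 1 ≤ v) (hv2 : v < a) (hv3 : v < b) :
    coinMax [1,a,b] v = 1 := by
  simp [coinMax, List.filter, hv, show ¬ (a ≤ v) by omega, show ¬ (b ≤ v) by omega]

lemma F_zero (a b : ℕ) : F a b 0 = 0 := by simp [F, g]

lemma F_small (a b v : ℕ) (h : 1 < a) (hv : v < a) (hvb : v < b) : F a b v = v := by
  simp [F, g, Nat.div_eq_of_lt hvb, Nat.mod_eq_of_lt hvb,
    Nat.div_eq_of_lt hv, Nat.mod_eq_of_lt hv]

lemma F_add_b (a b v : ℕ) (hb : 0 < b) : F a b (v + b) = F a b v + 1 := by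
  simp [F, Nat.add_div_right _ hb, Nat.add_mod_right]
  omega

lemma F_add_a_of_lt (a b v : ℕ) (ha : 0 < a) (hab : a < b) (hvb : v + a < b) (hva : a ≤ v + a) :
    F a b (v + a) = F a b v + 1 := by
  have hv : v < b := by omega
  simp [F, g, Nat.div_eq_of_lt hvb, Nat.mod_eq_of_lt hvb, Nat.div_eq_of_lt hv,
    Nat.mod_eq_of_lt hv, Nat.add_div_right _ ha, Nat.add_mod_right]
  omega

/-- greedy equals the closed form -/
lemma grdAux_eq (a b : ℕ) (ha : 1 < a) (hab : a < b) :
    ∀ fuel v, v ≤ fuel → grdAux [1,a,b] fuel v = F a b v := by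
  intro fuel
  induction fuel with
  | zero => intro v hv; interval_cases v; simp [grdAux, F_zero]
  | succ n ih =>
    intro v hv
    by_cases hv0 : v = 0
    · subst hv0; simp [grdAux, F_zero]
    rcases Nat.lt_or_ge v b with hvb | hvb
    · rcases Nat.lt_or_ge v a with hva | hva
      · -- small case: coin 1
        obtain ⟨w, rfl⟩ : ∃ w, v = w + 1 := ⟨v - 1, by omega⟩
        simp only [grdAux, coinMax_lo a b _ (by omega) hva hvb]
        rw [if_neg (by omega)]
        rw [Nat.add_sub_cancel, ih _ (by omega)]
        rw [F_small a b _ ha hva hvb, F_small a b _ ha (by omega) (by omega)]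
        omega
      · -- mid case: coin a
        obtain ⟨w, rfl⟩ : ∃ w, v = w + a := ⟨v - a, by omega⟩
        simp only [grdAux, coinMax_mid a b _ ha hva hvb]
        rw [if_neg (by omega)]
        rw [Nat.add_sub_cancel, ih _ (by omega),
          F_add_a_of_lt a b _ (by omega) hab hvb hva]
        omega
    · -- high case: coin b
      obtain ⟨w, rfl⟩ : ∃ w, v = w + b := ⟨v - b, by omega⟩
      simp only [grdAux, coinMax_hi a b _ ha hab hvb]
      rw [if_neg (by omega)]
      rw [Nat.add_sub_cancel, ih _ (by omega), F_add_b a b _ (by omega)]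
      omega

lemma grd_eq (a b v : ℕ) (ha : 1 < a) (hab : a < b) : grd [1,a,b] v = F a b v :=
  grdAux_eq a b ha hab v v le_rfl

lemma g_succ_le (a s : ℕ) (ha : 0 < a) : g a (s + 1) ≤ g a s + 1 := by
  unfold g
  rcases Nat.lt_or_ge (s % a + 1) a with h | h
  · have h1 : s + 1 = a * (s / a) + (s % a + 1) := by
      have := Nat.div_add_mod s a; omega
    rw [h1, Nat.mul_add_div ha, Nat.mul_add_mod, Nat.div_eq_of_lt h, Nat.mod_eq_of_lt h]
    omega
  · have hm : s % a < a := Nat.mod_lt _ ha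
    have hx : a * (s / a + 1) = a * (s / a) + a := by ring
    have h1 : s + 1 = a * (s / a + 1) + 0 := by
      have := Nat.div_add_mod s a; omega
    rw [h1, Nat.mul_add_div ha, Nat.mul_add_mod]
    simp

lemma F_succ_le (a b v : ℕ) (ha : 0 < a) (hb : 0 < b) : F a b (v + 1) ≤ F a b v + 1 := by
  unfold F
  rcases Nat.lt_or_ge (v % b + 1) b with h | h
  · have h1 : v + 1 = b * (v / b) + (v % b + 1) := by
      have := Nat.div_add_mod v b; omega
    rw [h1, Nat.mul_add_div hb, Nat.mul_add_mod, Nat.div_eq_of_lt h, Nat.mod_eq_of_lt h]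
    have := g_succ_le a (v % b) ha
    omega
  · have hm : v % b < b := Nat.mod_lt _ hb
    have hx : b * (v / b + 1) = b * (v / b) + b := by ring
    have h1 : v + 1 = b * (v / b + 1) + 0 := by
      have := Nat.div_add_mod v b; omega
    rw [h1, Nat.mul_add_div hb, Nat.mul_add_mod]
    simp [g]

/-- The key arithmetic lemma using the condition. -/
lemma key_ineq (a b m e : ℕ) (ha : 1 < a) (hab : a < b) (hm : 0 < m)
    (h1 : m * a - m ≤ b - a) (h2 : b - a ≤ m * a) (he : e < a) :
    e ≤ g a (b - a + e) := by
  set s := b - a + e with hs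
  have hma : m ≤ m * a := Nat.le_mul_of_pos_right m (by omega)
  have hmm : m * (a - 1) = m * a - m := by
    rw [Nat.mul_sub_one]
  have h6 : a * (m + 1) = m * a + a := by ring
  have hslt : s < a * (m + 1) := by omega
  have hdm : s / a ≤ m := by
    have := Nat.div_lt_of_lt_mul hslt; omega
  have hdam : (a - 1) * (s / a) ≤ (a - 1) * m := by gcongr
  have hdm2 : a * (s / a) ≤ s := Nat.mul_div_le s a
  have hmod := Nat.div_add_mod s a
  have haa : (a - 1) * (s / a) = a * (s / a) - s / a := Nat.sub_one_mul a (s / a)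
  have hsa : s / a ≤ a * (s / a) := Nat.le_mul_of_pos_left _ (by omega)
  have hfin : (a - 1) * m = m * (a - 1) := Nat.mul_comm _ _
  unfold g
  omega

lemma F_add_a_le (a b m v : ℕ) (ha : 1 < a) (hab : a < b) (hm : 0 < m)
    (h1 : m * a - m ≤ b - a) (h2 : b - a ≤ m * a) :
    F a b (v + a) ≤ F a b v + 1 := by
  rcases Nat.lt_or_ge (v % b + a) b with h | h
  · have h1' : v + a = b * (v / b) + (v % b + a) := by
      have := Nat.div_add_mod v b; omega
    unfold F
    rw [h1', Nat.mul_add_div (by omega), Nat.mul_add_mod, Nat.div_eq_of_lt h, Nat.mod_eq_of_lt h]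
    unfold g
    rw [Nat.add_div_right _ (by omega), Nat.add_mod_right]
    omega
  · have hm' : v % b < b := Nat.mod_lt _ (by omega)
    set e := v % b + a - b with he
    have hea : e < a := by omega
    have hx : b * (v / b + 1) = b * (v / b) + b := by ring
    have h1' : v + a = b * (v / b + 1) + e := by
      have := Nat.div_add_mod v b; omega
    unfold F
    rw [h1', Nat.mul_add_div (by omega), Nat.mul_add_mod,
      Nat.div_eq_of_lt (by omega : e < b), Nat.mod_eq_of_lt (by omega : e < b)]
    have hge : g a e = e := by
      simp [g, Nat.div_eq_of_lt hea, Nat.mod_eq_of_lt hea]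
    have hkey : e ≤ g a (b - a + e) := key_ineq a b m e ha hab hm h1 h2 hea
    have hsb : b - a + e = v % b := by omega
    rw [hsb] at hkey
    omega

lemma F_add_mul_le (a b c : ℕ) (hstep : ∀ w, F a b (w + c) ≤ F a b w + 1) :
    ∀ n w, F a b (w + n * c) ≤ F a b w + n := by
  intro n
  induction n with
  | zero => simp
  | succ k ih =>
    intro w
    have h1 : w + (k + 1) * c = (w + k * c) + c := by ring
    rw [h1]
    calc F a b ((w + k * c) + c) ≤ F a b (w + k * c) + 1 := hstep _
      _ ≤ F a b w + k + 1 := by have := ih w; omega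

/-- lower bound: F is at most any representation cost -/
lemma F_le_cost (a b m : ℕ) (ha : 1 < a) (hab : a < b) (hm : 0 < m)
    (h1 : m * a - m ≤ b - a) (h2 : b - a ≤ m * a) (x1 x2 x3 : ℕ) :
    F a b (x1 * 1 + x2 * a + x3 * b) ≤ x1 + x2 + x3 := by
  have s1 : ∀ w, F a b (w + 1) ≤ F a b w + 1 := fun w => F_succ_le a b w (by omega) (by omega)
  have sa : ∀ w, F a b (w + a) ≤ F a b w + 1 := fun w => F_add_a_le a b m w ha hab hm h1 h2
  have sb : ∀ w, F a b (w + b) ≤ F a b w + 1 := fun w => le_of_eq (F_add_b a b w (by omega))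
  have c1 : F a b (0 + x1 * 1) ≤ F a b 0 + x1 := F_add_mul_le a b 1 s1 x1 0
  have c2 : F a b ((0 + x1 * 1) + x2 * a) ≤ F a b (0 + x1 * 1) + x2 := F_add_mul_le a b a sa x2 _
  have c3 : F a b (((0 + x1 * 1) + x2 * a) + x3 * b) ≤ F a b ((0 + x1 * 1) + x2 * a) + x3 :=
    F_add_mul_le a b b sb x3 _
  have hz : F a b 0 = 0 := F_zero a b
  have he : x1 * 1 + x2 * a + x3 * b = ((0 + x1 * 1) + x2 * a) + x3 * b := by ring
  rw [he]
  omega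

/-- the greedy representation witnesses membership -/
lemma F_mem (a b v : ℕ) (ha : 1 < a) (hab : a < b) :
    F a b v ∈ reprCosts [1,a,b] v := by
  refine ⟨[v % b % a, v % b / a, v / b], by simp, ?_, by simp [F, g]; ring⟩
  simp only [List.zipWith, List.sum_cons, List.sum_nil]
  have e1 := Nat.div_add_mod (v % b) a
  have e2 := Nat.div_add_mod v b
  have c1 : v % b / a * a = a * (v % b / a) := by ring
  have c2 : v / b * b = b * (v / b) := by ring
  omega

end Stmt7Aux

open Stmt7Aux in
theorem stmt_7 (c₂ c₃ : ℕ) (h2 : 1 < c₂) (h3 : c₂ < c₃) :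
    Orderly [1, c₂, c₃] ↔
      ∃ m : ℕ, 0 < m ∧ m * c₂ - m ≤ c₃ - c₂ ∧ c₃ - c₂ ≤ m * c₂ := by
  constructor
  · intro ho
    obtain ⟨q, r, hdm, hrlt⟩ : ∃ q r, c₂ * q + r = c₃ ∧ r < c₂ :=
      ⟨c₃ / c₂, c₃ % c₂, Nat.div_add_mod c₃ c₂, Nat.mod_lt _ (by omega)⟩
    have hq1 : 1 ≤ q := by
      by_contra h
      have hq0 : q = 0 := by omega
      subst hq0
      omega
    by_cases hr0 : r = 0
    · -- c₂ ∣ c₃ : take m = q - 1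
      have hq2 : 2 ≤ q := by
        by_contra h
        have hq0 : q = 1 := by omega
        subst hq0
        omega
      have hq' : q - 1 + 1 = q := by omega
      have hE : (q - 1) * c₂ + c₂ = c₂ * q := by
        calc (q - 1) * c₂ + c₂ = ((q - 1) + 1) * c₂ := by ring
          _ = c₂ * q := by rw [hq']; ring
      exact ⟨q - 1, by omega, by omega, by omega⟩
    · -- r > 0 : test value v = (q+1) * c₂
      have hrpos : 0 < r := by omega
      have hvb : (q + 1) * c₂ = c₃ + (c₂ - r) := by
        have : (q + 1) * c₂ = c₂ * q + c₂ := by ring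
        omega
      have hvpos : 0 < (q + 1) * c₂ := by omega
      have hgv : grd [1, c₂, c₃] ((q + 1) * c₂) = 1 + (c₂ - r) := by
        rw [grd_eq c₂ c₃ _ h2 h3]
        have hlt : c₂ - r < c₃ := by omega
        have hdiv : (q + 1) * c₂ / c₃ = 1 := by
          rw [hvb, show c₃ + (c₂ - r) = c₃ * 1 + (c₂ - r) by ring,
            Nat.mul_add_div (by omega), Nat.div_eq_of_lt hlt]
        have hmod : (q + 1) * c₂ % c₃ = c₂ - r := by
          rw [hvb, show c₃ + (c₂ - r) = c₃ * 1 + (c₂ - r) by ring,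
            Nat.mul_add_mod, Nat.mod_eq_of_lt hlt]
        unfold F
        rw [hdiv, hmod]
        have : g c₂ (c₂ - r) = c₂ - r := by
          simp [g, Nat.div_eq_of_lt (by omega : c₂ - r < c₂),
            Nat.mod_eq_of_lt (by omega : c₂ - r < c₂)]
        omega
      have hmem : (q + 1) ∈ reprCosts [1, c₂, c₃] ((q + 1) * c₂) := by
        refine ⟨[0, q + 1, 0], by simp, ?_, by simp⟩
        simp
      have hle : opt [1, c₂, c₃] ((q + 1) * c₂) ≤ q + 1 := Nat.sInf_le hmem
      have heq := ho ((q + 1) * c₂) hvpos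
      have hcr : c₂ - r ≤ q := by
        rw [hgv] at heq
        omega
      have hcomm : q * c₂ = c₂ * q := by ring
      have hge : c₂ ≤ c₂ * q := Nat.le_mul_of_pos_right c₂ (by omega)
      exact ⟨q, by omega, by omega, by omega⟩
  · rintro ⟨m, hm, hc1, hc2⟩
    intro v hv
    rw [grd_eq c₂ c₃ v h2 h3]
    have hmem := F_mem c₂ c₃ v h2 h3
    have hlb : ∀ k ∈ reprCosts [1, c₂, c₃] v, F c₂ c₃ v ≤ k := by
      rintro k ⟨x, hlen, hsum, hcost⟩
      obtain ⟨x1, x2, x3, rfl⟩ := List.length_eq_three.mp (by simpa using hlen)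
      simp only [List.zipWith, List.sum_cons, List.sum_nil] at hsum hcost
      have hveq : v = x1 * 1 + x2 * c₂ + x3 * c₃ := by omega
      have := F_le_cost c₂ c₃ m h2 h3 hm hc1 hc2 x1 x2 x3
      rw [hveq]
      omega
    have h1 : opt [1, c₂, c₃] v ≤ F c₂ c₃ v := Nat.sInf_le hmem
    have h2' : F c₂ c₃ v ≤ opt [1, c₂, c₃] v :=
      hlb _ (Nat.sInf_mem ⟨_, hmem⟩)
    omega
end
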